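/- arXiv:2501.14463 — 2 statements merged into one kernel-verified Lean document; each statement's English description precedes it below -/
import Mathlib

section
/- Let G be a group and X ⊆ A^G a subshift. The set {τ_g : g Fix(X) ∈ Z(G/Fix(X))}, where τ_g(x)(h) = x(hg), is a subgroup of the center of Aut(X) and is isomorphic to Z(G/Fix(X)). -/
/-- The (left) shift action on configurations: `(shift g x) h = x (g⁻¹ * h)`. -/
def shift {G A : Type*} [Group G] (g : G) (x : G → A) : G → A := fun h => x (g⁻¹ * h)

/-- A subshift: a closed, shift-invariant subset of the full shift `A^G`. -/
def IsSubshift {G A : Type*} [Group G] [TopologicalSpace A] (X : Set (G → A)) : Prop :=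
  IsClosed X ∧ ∀ g : G, ∀ x ∈ X, shift g x ∈ X

/-- `X` is strongly irreducible with constant `K`: whenever `S * K ∩ T = ∅`, any two
patterns of `X` with supports `S` and `T` can be jointly realized in `X`. -/
def StronglyIrreducible {G A : Type*} [Group G] (X : Set (G → A)) (K : Finset G) : Prop :=
  ∀ S T : Finset G, (∀ s ∈ S, ∀ k ∈ K, s * k ∉ T) →
    ∀ x ∈ X, ∀ y ∈ X, ∃ z ∈ X, (∀ g ∈ S, z g = x g) ∧ (∀ g ∈ T, z g = y g)

/-- The shift action on a shift-invariant subset, as a map `X → X`. -/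
def shiftX {G A : Type*} [Group G] (X : Set (G → A))
    (hX : ∀ g : G, ∀ x ∈ X, shift g x ∈ X) (g : G) (x : X) : X :=
  ⟨shift g (x : G → A), hX g x x.2⟩

/-- The automorphism group of a subshift `X`: shift-commuting self-homeomorphisms of `X`,
as a subgroup of the permutation group of `X`. -/
def Aut {G A : Type*} [Group G] [TopologicalSpace A] (X : Set (G → A))
    (hX : ∀ g : G, ∀ x ∈ X, shift g x ∈ X) : Subgroup (Equiv.Perm X) where
  carrier := {φ | Continuous φ ∧ Continuous φ.symm ∧
    ∀ (g : G) (x : X), φ (shiftX X hX g x) = shiftX X hX g (φ x)}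
  one_mem' := by
    refine ⟨?_, ?_, fun g x => rfl⟩
    · simpa using continuous_id
    · exact continuous_id
  mul_mem' := by
    rintro a b ⟨ha1, ha2, ha3⟩ ⟨hb1, hb2, hb3⟩
    refine ⟨?_, ?_, fun g x => ?_⟩
    · have : ⇑(a * b) = ⇑a ∘ ⇑b := rfl
      rw [this]; exact ha1.comp hb1
    · have : ⇑(a * b).symm = ⇑b.symm ∘ ⇑a.symm := rfl
      rw [this]; exact hb2.comp ha2
    · have h1 : (a * b) (shiftX X hX g x) = a (b (shiftX X hX g x)) := rfl
      have h2 : (a * b) x = a (b x) := rfl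
      rw [h1, h2, hb3, ha3]
  inv_mem' := by
    rintro a ⟨h1, h2, h3⟩
    refine ⟨?_, ?_, fun g x => ?_⟩
    · have : ⇑(a⁻¹) = ⇑a.symm := rfl
      rw [this]; exact h2
    · have : ⇑(a⁻¹).symm = ⇑a := rfl
      rw [this]; exact h1
    · apply a.injective
      have e : ∀ y, a (a⁻¹ y) = y := fun y => a.apply_symm_apply y
      rw [e, h3, e]

/-- The kernel of the shift action on `X`, as a subgroup of `G`. -/
def fixSubgroup {G A : Type*} [Group G] (X : Set (G → A)) : Subgroup G where
  carrier := {g | ∀ x ∈ X, shift g x = x}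
  one_mem' := by intro x hx; funext h; simp [shift]
  mul_mem' := by
    intro a b ha hb x hx
    have h1 : shift (a * b) x = shift a (shift b x) := by
      funext h; simp [shift, mul_assoc]
    rw [h1, hb x hx, ha x hx]
  inv_mem' := by
    intro a ha x hx
    have h1 : shift a⁻¹ (shift a x) = x := by funext h; simp [shift]
    calc shift a⁻¹ x = shift a⁻¹ (shift a x) := by rw [ha x hx]
      _ = x := h1

/-! The shift action is a homomorphism `G →* Perm X` with kernel `Fix(X)`, so it descends to an
injective homomorphism on `G/Fix(X)`. A central class acts by a map commuting with all shifts, hence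
by an automorphism, and it commutes with every automorphism because automorphisms commute with
shifts. Since `Z(G/Fix(X))` is abelian, `γ ↦ γ⁻¹` is a homomorphism, and composing with it gives
`τ`: for central `g`, the elements `g h` and `h g` have the same class, so `x (g h) = x (h g)` on
`X`, i.e. `g⁻¹ · x` is the right shift of `x` by `g`. -/

section ShiftAction

variable {G A : Type*} [Group G] {X : Set (G → A)}

lemma shift_mul (a b : G) (x : G → A) : shift (a * b) x = shift a (shift b x) := by
  funext h; simp [shift, mul_assoc]

lemma shift_one (x : G → A) : shift 1 x = x := by
  funext h; simp [shift]

variable (hX : ∀ g : G, ∀ x ∈ X, shift g x ∈ X)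

def shiftPerm : G →* Equiv.Perm X where
  toFun g :=
    { toFun := shiftX X hX g
      invFun := shiftX X hX g⁻¹
      left_inv := fun x => Subtype.ext <| by simp [shiftX, ← shift_mul, shift_one]
      right_inv := fun x => Subtype.ext <| by simp [shiftX, ← shift_mul, shift_one] }
  map_one' := Equiv.ext fun x => Subtype.ext (shift_one _)
  map_mul' a b := Equiv.ext fun x => Subtype.ext (shift_mul a b _)

@[simp]
lemma coe_shiftPerm_apply (g : G) (x : X) : ((shiftPerm hX g x : X) : G → A) = shift g x := rfl

lemma ker_shiftPerm : (shiftPerm hX).ker = fixSubgroup X := by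
  ext g
  simp only [MonoidHom.mem_ker, Equiv.Perm.ext_iff, Subtype.ext_iff, coe_shiftPerm_apply,
    Equiv.Perm.coe_one, id_eq, Subtype.forall]
  rfl

variable [(fixSubgroup X).Normal]

def quotShiftPerm : G ⧸ fixSubgroup X →* Equiv.Perm X :=
  QuotientGroup.lift _ (shiftPerm hX) (ker_shiftPerm hX).ge

@[simp]
lemma quotShiftPerm_mk (g : G) : quotShiftPerm hX (g : G ⧸ fixSubgroup X) = shiftPerm hX g :=
  QuotientGroup.lift_mk _ _ g

lemma quotShiftPerm_injective : Function.Injective (quotShiftPerm hX) :=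
  (QuotientGroup.injective_lift_iff _ _ _).2 (ker_shiftPerm hX).symm

lemma quotShiftPerm_inv_apply_of_mem_center {g : G}
    (hg : (g : G ⧸ fixSubgroup X) ∈ Subgroup.center (G ⧸ fixSubgroup X)) (x : X) (h : G) :
    ((quotShiftPerm hX (g : G ⧸ fixSubgroup X)⁻¹ x : X) : G → A) h = (x : G → A) (h * g) := by
  -- `g * h` and `h * g` have the same class, so they act alike; evaluate at `1`.
  have hgh : shiftPerm hX (g * h)⁻¹ = shiftPerm hX (h * g)⁻¹ := by
    rw [← quotShiftPerm_mk, ← quotShiftPerm_mk, QuotientGroup.mk_inv, QuotientGroup.mk_inv,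
      QuotientGroup.mk_mul, QuotientGroup.mk_mul, Subgroup.mem_center_iff.1 hg]
  have hgh1 := congrArg (fun σ : Equiv.Perm X => (σ x : G → A) 1) hgh
  simp only [coe_shiftPerm_apply, shift, inv_inv, mul_one] at hgh1
  rw [← QuotientGroup.mk_inv, quotShiftPerm_mk, coe_shiftPerm_apply, shift, inv_inv]
  exact hgh1

end ShiftAction

section CentralShifts

-- Makes the center a `CommGroup`, as `invMonoidHom` requires.
open scoped IsMulCommutative

variable {G A : Type*} [Group G] [TopologicalSpace A] {X : Set (G → A)}
  (hX : ∀ g : G, ∀ x ∈ X, shift g x ∈ X)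

lemma continuous_shiftPerm (g : G) : Continuous (shiftPerm hX g) :=
  (continuous_pi fun h => (continuous_apply (g⁻¹ * h)).comp continuous_subtype_val).subtype_mk
    (fun x : X => hX g x x.2)

lemma commute_shiftPerm_of_mem_Aut {φ : Equiv.Perm X} (hφ : φ ∈ Aut X hX) (g : G) :
    Commute φ (shiftPerm hX g) :=
  Equiv.ext fun x => hφ.2.2 g x

variable [(fixSubgroup X).Normal]

lemma commute_quotShiftPerm_of_mem_Aut {φ : Equiv.Perm X} (hφ : φ ∈ Aut X hX)
    (q : G ⧸ fixSubgroup X) : Commute φ (quotShiftPerm hX q) := by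
  induction q using QuotientGroup.induction_on with
  | H g => rw [quotShiftPerm_mk]; exact commute_shiftPerm_of_mem_Aut hX hφ g

lemma quotShiftPerm_mem_Aut {q : G ⧸ fixSubgroup X}
    (hq : q ∈ Subgroup.center (G ⧸ fixSubgroup X)) : quotShiftPerm hX q ∈ Aut X hX := by
  induction q using QuotientGroup.induction_on with
  | H g =>
    have hsymm : (shiftPerm hX g).symm = shiftPerm hX g⁻¹ := (map_inv _ g).symm
    refine ⟨continuous_shiftPerm hX g, hsymm ▸ continuous_shiftPerm hX g⁻¹, fun k x => ?_⟩
    have hkg := congrArg (quotShiftPerm hX) (Subgroup.mem_center_iff.1 hq k)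
    simp only [map_mul, quotShiftPerm_mk] at hkg
    exact (Equiv.congr_fun hkg x).symm

def rightShiftHom : Subgroup.center (G ⧸ fixSubgroup X) →* Aut X hX :=
  (((quotShiftPerm hX).comp (Subgroup.center _).subtype).codRestrict (Aut X hX)
    fun γ => quotShiftPerm_mem_Aut hX γ.2).comp invMonoidHom

lemma coe_rightShiftHom (γ : Subgroup.center (G ⧸ fixSubgroup X)) :
    (rightShiftHom hX γ : Equiv.Perm X) = quotShiftPerm hX (γ : G ⧸ fixSubgroup X)⁻¹ := rfl

lemma rightShiftHom_injective : Function.Injective (rightShiftHom hX) := fun γ δ h =>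
  inv_injective <| Subtype.ext <| quotShiftPerm_injective hX <| by
    simpa only [coe_rightShiftHom, Subgroup.coe_inv] using congrArg Subtype.val h

lemma rightShiftHom_mem_center (γ : Subgroup.center (G ⧸ fixSubgroup X)) :
    rightShiftHom hX γ ∈ Subgroup.center (Aut X hX) :=
  Subgroup.mem_center_iff.2 fun φ => Subtype.ext (commute_quotShiftPerm_of_mem_Aut hX φ.2 _)

end CentralShifts

theorem stmt7_general {G A : Type*} [Group G] [TopologicalSpace A]
    (X : Set (G → A)) (hX : IsSubshift X) [hN : (fixSubgroup X).Normal] :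
    ∃ θ : Subgroup.center (G ⧸ fixSubgroup X) →* (Aut X hX.2),
      Function.Injective θ ∧
      (∀ γ : Subgroup.center (G ⧸ fixSubgroup X),
        θ γ ∈ Subgroup.center (Aut X hX.2)) ∧
      ∀ (g : G) (hg : (QuotientGroup.mk g : G ⧸ fixSubgroup X) ∈
          Subgroup.center (G ⧸ fixSubgroup X)) (x : X) (h : G),
        ((θ ⟨QuotientGroup.mk g, hg⟩ : Equiv.Perm X) x : G → A) h = (x : G → A) (h * g) :=
  ⟨rightShiftHom hX.2, rightShiftHom_injective hX.2, rightShiftHom_mem_center hX.2,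
    fun _ hg => quotShiftPerm_inv_apply_of_mem_center hX.2 hg⟩

/-- the right shifts `τ_g` for `g·Fix(X)` central in `G/Fix(X)` form a
subgroup of the center of `Aut(X)` isomorphic to `Z(G/Fix(X))`: there is an injective
homomorphism from `Z(G/Fix(X))` into `Aut(X)` whose image lies in the center and which
sends the class of `g` to `τ_g`. -/
theorem stmt7 {G A : Type*} [Group G] [Fintype A] [TopologicalSpace A] [DiscreteTopology A]
    (X : Set (G → A)) (hX : IsSubshift X) [hN : (fixSubgroup X).Normal] :
    ∃ θ : Subgroup.center (G ⧸ fixSubgroup X) →* (Aut X hX.2),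
      Function.Injective θ ∧
      (∀ γ : Subgroup.center (G ⧸ fixSubgroup X),
        θ γ ∈ Subgroup.center (Aut X hX.2)) ∧
      ∀ (g : G) (hg : (QuotientGroup.mk g : G ⧸ fixSubgroup X) ∈
          Subgroup.center (G ⧸ fixSubgroup X)) (x : X) (h : G),
        ((θ ⟨QuotientGroup.mk g, hg⟩ : Equiv.Perm X) x : G → A) h = (x : G → A) (h * g) :=
  stmt7_general X hX (hN := hN)
end

section
/- Let G be a group, X ⊆ A^G a non-trivial strongly irreducible subshift with constant K, and H ≤ G a subgroup containing K. Then X has the strong topological Markov property if and only if X|_H does. -/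
open scoped Classical

/-- Restriction of a configuration to a subgroup. -/
def restrictH {G A : Type*} [Group G] (H : Subgroup G) (x : G → A) : H → A :=
  fun h => x (h : G)

/-- The strong topological Markov property: there is a finite memory set `M` such that
configurations of `X` agreeing on `FM ∖ F` can be exchanged on `F`. -/
def StrongTMP {G A : Type*} [Group G] (X : Set (G → A)) : Prop :=
  ∃ M : Finset G, ∀ F : Finset G, ∀ x ∈ X, ∀ y ∈ X,
    (∀ g : G, (∃ f ∈ F, ∃ m ∈ M, g = f * m) → g ∉ F → x g = y g) →
    (fun g : G => if g ∈ F then x g else y g) ∈ X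

/-!
Strong irreducibility with constant `K ⊆ H`, together with closedness of `X`, lets one splice
any two points of `X` along `H`: the result agrees with the first on `H` and with the second
off `H`. Hence a memory set `M` of `X` gives the memory set `M ∩ H` of `X|_H`: splice the
second configuration with the first along `H` and exchange in `X`. Conversely, let `M ⊆ H` be
a memory set of `X|_H`. Right multiplication by `M` does not leave a left coset `gH`, so an
exchange on a finite `F` can be carried out one coset block `F ∩ gH` at a time; translating by
`g⁻¹` moves the block into `H`, where the exchange is done in `X|_H` and then extended to `G`
by splicing.
-/

open Pointwise

section Memory

variable {G A : Type*} [Group G]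

def IsMemorySetOn [DecidableEq G] (X : Set (G → A)) (M F : Finset G) : Prop :=
  ∀ x ∈ X, ∀ y ∈ X, Set.EqOn x y ↑((F * M) \ F) → F.piecewise x y ∈ X

def IsMemorySet [DecidableEq G] (X : Set (G → A)) (M : Finset G) : Prop :=
  ∀ F : Finset G, IsMemorySetOn X M F

theorem strongTMP_iff_exists_isMemorySet [DecidableEq G] {X : Set (G → A)} :
    StrongTMP X ↔ ∃ M : Finset G, IsMemorySet X M := by
  refine exists_congr fun M => forall_congr' fun F =>
    forall₂_congr fun x _ => forall₂_congr fun y _ =>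
      imp_congr ?_ (by unfold Finset.piecewise; congr!)
  simp only [Set.EqOn, Finset.coe_sdiff, Set.mem_sdiff, Finset.mem_coe, Finset.mem_mul,
    eq_comm (b := _ * _), and_imp]

end Memory

theorem IsClosed.mem_of_forall_finset_exists_eqOn {ι A : Type*} [TopologicalSpace A]
    [DiscreteTopology A] {X : Set (ι → A)} (hX : IsClosed X) {x : ι → A}
    (h : ∀ W : Finset ι, ∃ z ∈ X, Set.EqOn z x W) : x ∈ X := by
  rw [← hX.closure_eq, mem_closure_iff_nhds]
  intro U hU
  rw [nhds_pi, Filter.mem_pi] at hU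
  obtain ⟨I, hI, t, ht, hsub⟩ := hU
  obtain ⟨z, hz, hzx⟩ := h hI.toFinset
  refine ⟨z, hsub fun i hi => ?_, hz⟩
  rw [hzx (hI.mem_toFinset.mpr hi)]
  exact mem_of_mem_nhds (ht i)

section Shift

variable {G A : Type*} [Group G]

@[simp]
theorem shift_shift_inv (g : G) (x : G → A) : shift g (shift g⁻¹ x) = x := by
  funext h
  simp [shift]

theorem shift_piecewise [DecidableEq G] (g : G) (C : Finset G) (x y : G → A) :
    shift g (C.piecewise x y) = (g • C).piecewise (shift g x) (shift g y) := by
  funext h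
  simp only [shift, Finset.piecewise, ← Finset.inv_smul_mem_iff, smul_eq_mul]

theorem IsMemorySetOn.smul [DecidableEq G] {X : Set (G → A)}
    (hX : ∀ g : G, ∀ x ∈ X, shift g x ∈ X) {M C : Finset G} (hC : IsMemorySetOn X M C) (g : G) : IsMemorySetOn X M (g • C) := by
  intro x hx y hy hxy
  have hxy' : Set.EqOn (shift g⁻¹ x) (shift g⁻¹ y) ↑((C * M) \ C) := fun a ha => by
    apply hxy
    rw [Finset.mem_coe, smul_mul_assoc, ← Finset.smul_finset_sdiff, inv_inv, ← smul_eq_mul]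
    exact Finset.smul_mem_smul_finset ha
  simpa [shift_piecewise] using hX g _ (hC _ (hX _ x hx) _ (hX _ y hy) hxy')

end Shift

section Splicing

variable {G A : Type*} [Group G] [TopologicalSpace A] [DiscreteTopology A] {X : Set (G → A)}

theorem StronglyIrreducible.piecewise_mem {K : Finset G} (hSI : StronglyIrreducible X K)
    (hX : IsClosed X) {P : Set G} [DecidablePred (· ∈ P)] (hP : ∀ g ∈ P, ∀ k ∈ K, g * k ∈ P)
    {x y : G → A} (hx : x ∈ X) (hy : y ∈ X) : P.piecewise x y ∈ X := by
  refine hX.mem_of_forall_finset_exists_eqOn fun W => ?_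
  obtain ⟨z, hz, hzx, hzy⟩ := hSI (W.filter (· ∈ P)) (W.filter (· ∉ P))
    (fun s hs k hk hsk => (Finset.mem_filter.mp hsk).2 (hP s (Finset.mem_filter.mp hs).2 k hk))
    x hx y hy
  refine ⟨z, hz, fun g hg => ?_⟩
  by_cases hgP : g ∈ P
  · rw [Set.piecewise_eq_of_mem _ _ _ hgP, hzx g (Finset.mem_filter.mpr ⟨hg, hgP⟩)]
  · rw [Set.piecewise_eq_of_notMem _ _ _ hgP, hzy g (Finset.mem_filter.mpr ⟨hg, hgP⟩)]

theorem StronglyIrreducible.subgroup_piecewise_mem {K : Finset G}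
    (hSI : StronglyIrreducible X K) (hX : IsClosed X) {H : Subgroup G} (hK : ∀ k ∈ K, k ∈ H) {x y : G → A} (hx : x ∈ X)
    (hy : y ∈ X) : (H : Set G).piecewise x y ∈ X :=
  hSI.piecewise_mem hX (fun _ hg k hk => H.mul_mem hg (hK k hk)) hx hy

end Splicing

theorem isMemorySet_of_forall_fiber {G A Q : Type*} [Group G] [DecidableEq G]
    {X : Set (G → A)} {M : Finset G} (q : G → Q) (hq : ∀ g, ∀ m ∈ M, q (g * m) = q g)
    (hfiber : ∀ a (C : Finset G), (∀ c ∈ C, q c = a) → IsMemorySetOn X M C) :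
    IsMemorySet X M := by
  intro F
  induction F using Finset.strongInduction with
  | H F ih =>
  intro x hx y hy hxy
  rcases F.eq_empty_or_nonempty with rfl | ⟨g₀, hg₀⟩
  · simpa using hy
  set C := F.filter (q · = q g₀)
  set F₂ := F.filter (q · ≠ q g₀)
  have hF₂ : F₂ ⊂ F := Finset.filter_ssubset.mpr ⟨g₀, hg₀, by simp⟩
  have hz : F₂.piecewise x y ∈ X := by
    refine ih F₂ hF₂ x hx y hy fun g hg => hxy ?_
    rw [Finset.mem_coe, Finset.mem_sdiff, Finset.mem_mul] at hg ⊢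
    obtain ⟨⟨f, hf, m, hm, rfl⟩, hfm⟩ := hg
    obtain ⟨hfF, hfq⟩ := Finset.mem_filter.mp hf
    exact ⟨⟨f, hfF, m, hm, rfl⟩, fun h => hfm (Finset.mem_filter.mpr ⟨h, hq f m hm ▸ hfq⟩)⟩
  have hC := hfiber (q g₀) C (fun c hc => (Finset.mem_filter.mp hc).2) x hx _ hz fun g hg => by
    rw [Finset.mem_coe, Finset.mem_sdiff, Finset.mem_mul] at hg
    obtain ⟨⟨c, hc, m, hm, rfl⟩, hcm⟩ := hg
    obtain ⟨hcF, hcq⟩ := Finset.mem_filter.mp hc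
    have hcmq : q (c * m) = q g₀ := (hq c m hm).trans hcq
    have hcmF : c * m ∉ F := fun h => hcm (Finset.mem_filter.mpr ⟨h, hcmq⟩)
    rw [Finset.piecewise_eq_of_notMem _ _ _ fun h => hcmF (Finset.mem_filter.mp h).1]
    exact hxy (by simpa [Finset.mem_mul] using ⟨⟨c, hcF, m, hm, rfl⟩, hcmF⟩)
  convert hC using 1
  funext g
  simp only [Finset.piecewise, C, F₂, Finset.mem_filter]
  by_cases hg : g ∈ F <;> by_cases hgq : q g = q g₀ <;> simp [hg, hgq]

theorem restrictH_piecewise_map {G A : Type*} [Group G] [DecidableEq G] {H : Subgroup G}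
    (F : Finset H) (x y : G → A) :
    restrictH H ((F.map (Function.Embedding.subtype (· ∈ H))).piecewise x y) =
      F.piecewise (restrictH H x) (restrictH H y) := by
  funext h
  simp [restrictH, Finset.piecewise]

section Subgroup

variable {G A : Type*} [Group G] [DecidableEq G] [TopologicalSpace A] [DiscreteTopology A]
  {X : Set (G → A)} {H : Subgroup G} {K : Finset G}

theorem IsMemorySet.image_restrictH (hX : IsClosed X) (hSI : StronglyIrreducible X K)
    (hK : ∀ k ∈ K, k ∈ H) {M : Finset G} (hM : IsMemorySet X M) :
    IsMemorySet (restrictH H '' X) (M.subtype (· ∈ H)) := by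
  rintro F _ ⟨x, hx, rfl⟩ _ ⟨y, hy, rfl⟩ hxy
  set F' := F.map (Function.Embedding.subtype (· ∈ H))
  have hxy' : Set.EqOn x ((H : Set G).piecewise y x) ↑((F' * M) \ F') := by
    intro g hg
    rw [Finset.mem_coe, Finset.mem_sdiff, Finset.mem_mul] at hg
    obtain ⟨⟨_, hf', m, hm, rfl⟩, hfm⟩ := hg
    obtain ⟨f, hf, rfl⟩ := Finset.mem_map.mp hf'
    change x (f * m) = (H : Set G).piecewise y x (f * m)
    by_cases hmH : m ∈ H
    · rw [Set.piecewise_eq_of_mem _ _ _ (H.mul_mem f.2 hmH)]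
      refine @hxy (f * ⟨m, hmH⟩) ?_
      rw [Finset.mem_coe, Finset.mem_sdiff, Finset.mem_mul]
      exact ⟨⟨f, hf, ⟨m, hmH⟩, Finset.mem_subtype.mpr hm, rfl⟩,
        fun h => hfm (Finset.mem_map' _ |>.mpr h)⟩
    · have hfmH : (f : G) * m ∉ H := fun h => hmH (by simpa using H.mul_mem (H.inv_mem f.2) h)
      rw [Set.piecewise_eq_of_notMem _ _ _ hfmH]
  refine ⟨_, hM F' x hx _ (hSI.subgroup_piecewise_mem hX hK hy hx) hxy', ?_⟩
  rw [restrictH_piecewise_map]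
  congr 1
  funext h
  simp [restrictH]

theorem IsMemorySet.isMemorySetOn_of_subset (hX : IsClosed X) (hSI : StronglyIrreducible X K)
    (hK : ∀ k ∈ K, k ∈ H) {M : Finset H} (hM : IsMemorySet (restrictH H '' X) M)
    {C : Finset G} (hC : ∀ c ∈ C, c ∈ H) :
    IsMemorySetOn X (M.map (Function.Embedding.subtype (· ∈ H))) C := by
  intro x hx z hz hxz
  set C' := C.subtype (· ∈ H)
  obtain ⟨u, hu, hux⟩ := hM C' _ ⟨x, hx, rfl⟩ _ ⟨z, hz, rfl⟩ fun h hh => by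
    rw [Finset.mem_coe, Finset.mem_sdiff, Finset.mem_mul] at hh
    obtain ⟨⟨c, hc, m, hm, rfl⟩, hcm⟩ := hh
    refine hxz ?_
    rw [Finset.mem_coe, Finset.mem_sdiff, Finset.mem_mul]
    exact ⟨⟨c, Finset.mem_subtype.mp hc, m, Finset.mem_map' _ |>.mpr hm, rfl⟩,
      fun h => hcm (Finset.mem_subtype.mpr h)⟩
  convert hSI.subgroup_piecewise_mem hX hK hu hz using 1
  funext g
  by_cases hg : g ∈ H
  · have hug := congrFun hux ⟨g, hg⟩
    simp only [restrictH, Finset.piecewise, C', Finset.mem_subtype] at hug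
    rw [Set.piecewise_eq_of_mem _ _ _ hg, hug]
    rfl
  · rw [Set.piecewise_eq_of_notMem _ _ _ hg,
      Finset.piecewise_eq_of_notMem _ _ _ fun h => hg (hC g h)]

theorem IsMemorySet.of_image_restrictH (hX : IsSubshift X) (hSI : StronglyIrreducible X K)
    (hK : ∀ k ∈ K, k ∈ H) {M : Finset H} (hM : IsMemorySet (restrictH H '' X) M) :
    IsMemorySet X (M.map (Function.Embedding.subtype (· ∈ H))) := by
  refine isMemorySet_of_forall_fiber (QuotientGroup.mk : G → G ⧸ H) (fun g m hm => ?_)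
    fun a C hC => ?_
  · obtain ⟨m, -, rfl⟩ := Finset.mem_map.mp hm
    exact QuotientGroup.mk_mul_of_mem g m.2
  · obtain ⟨g, rfl⟩ := QuotientGroup.mk_surjective a
    rw [← smul_inv_smul g C]
    refine (hM.isMemorySetOn_of_subset hX.1 hSI hK fun c hc => ?_).smul hX.2 g
    simpa using QuotientGroup.eq.mp (hC _ (Finset.mem_inv_smul_finset_iff.mp hc)).symm

end Subgroup

theorem stmt13_general {G A : Type*} [Group G] [TopologicalSpace A] [DiscreteTopology A]
    (X : Set (G → A)) (hX : IsSubshift X)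
    (H : Subgroup G) (KH : Finset H)
    (hSI : StronglyIrreducible X (KH.map ⟨Subtype.val, Subtype.val_injective⟩)) :
    StrongTMP X ↔ StrongTMP (restrictH H '' X) := by
  have hK : ∀ k ∈ KH.map ⟨Subtype.val, Subtype.val_injective⟩, k ∈ H := fun k hk => by
    obtain ⟨k, -, rfl⟩ := Finset.mem_map.mp hk
    exact k.2
  simp only [strongTMP_iff_exists_isMemorySet]
  exact ⟨fun ⟨_, hM⟩ => ⟨_, hM.image_restrictH hX.1 hSI hK⟩,
    fun ⟨_, hM⟩ => ⟨_, hM.of_image_restrictH hX hSI hK⟩⟩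

/-- a non-trivial strongly irreducible subshift with constant `K ⊆ H` has
the strong topological Markov property iff its restriction `X|_H` does. -/
theorem stmt13 {G A : Type*} [Group G] [Fintype A] [TopologicalSpace A] [DiscreteTopology A]
    (X : Set (G → A)) (hX : IsSubshift X) (hnt : ∃ x ∈ X, ∃ y ∈ X, x ≠ y)
    (H : Subgroup G) (KH : Finset H)
    (hSI : StronglyIrreducible X (KH.map ⟨Subtype.val, Subtype.val_injective⟩)) :
    StrongTMP X ↔ StrongTMP (restrictH H '' X) :=
  stmt13_general X hX H KH hSI
end
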